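/- arXiv:1001.5416 — 4 statements merged into one kernel-verified Lean document; each statement's English description precedes it below -/
import Mathlib

section
/- Let S be the 6×6 complex matrix S = (1/(2√5))·[[1,√5,2,2,√5,1],[√5,√5,0,0,-√5,-√5],[2,0,-1+√5,-1-√5,0,2],[2,0,-1-√5,-1+√5,0,2],[√5,-√5,0,0,√5,-√5],[1,-√5,2,2,-√5,1]], let T = diag(e^{-iπ/3}, e^{iπ/6}, e^{7iπ/15}, e^{13iπ/15}, e^{-5iπ/6}, e^{-iπ/3}), and let M be the 6×6 integer matrix with M_{1,1}=M_{1,6}=M_{6,1}=M_{6,6}=1, M_{3,3}=M_{4,4}=2, and all other entries 0. Then M·S = S·M and M·T = T·M. -/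
open Matrix

/-- `e^{iπa}` for `a : ℝ`. -/
noncomputable def ee (a : ℝ) : ℂ := Complex.exp (Complex.I * a * Real.pi)

/-- `√5` as a complex number. -/
noncomputable def s5 : ℂ := Real.sqrt 5

/-- The Kac–Peterson modular generator `S` of B2 at level 2. -/
noncomputable def S : Matrix (Fin 6) (Fin 6) ℂ :=
  (1 / (2 * s5)) •
    !![1, s5, 2, 2, s5, 1;
       s5, s5, 0, 0, -s5, -s5;
       2, 0, -1 + s5, -1 - s5, 0, 2;
       2, 0, -1 - s5, -1 + s5, 0, 2;
       s5, -s5, 0, 0, s5, -s5;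
       1, -s5, 2, 2, -s5, 1]

/-- The Kac–Peterson modular generator `T` of B2 at level 2. -/
noncomputable def T : Matrix (Fin 6) (Fin 6) ℂ :=
  Matrix.diagonal ![ee (-1/3), ee (1/6), ee (7/15), ee (13/15), ee (-5/6), ee (-1/3)]

/-- The modular invariant matrix of the exceptional partition function of B2 at level 2,
arising from the conformal embedding B2 ⊂ A4. -/
noncomputable def M : Matrix (Fin 6) (Fin 6) ℂ :=
  !![1, 0, 0, 0, 0, 1;
     0, 0, 0, 0, 0, 0;
     0, 0, 2, 0, 0, 0;
     0, 0, 0, 2, 0, 0;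
     0, 0, 0, 0, 0, 0;
     1, 0, 0, 0, 0, 1]


section aux
variable {α : Type*}

@[simp] lemma cv6_0 (x : α) (u : Fin 5 → α) : Matrix.vecCons x u 0 = x := rfl
@[simp] lemma cv6_1 (x : α) (u : Fin 5 → α) : Matrix.vecCons x u 1 = u 0 := rfl
@[simp] lemma cv6_2 (x : α) (u : Fin 5 → α) : Matrix.vecCons x u 2 = u 1 := rfl
@[simp] lemma cv6_3 (x : α) (u : Fin 5 → α) : Matrix.vecCons x u 3 = u 2 := rfl
@[simp] lemma cv6_4 (x : α) (u : Fin 5 → α) : Matrix.vecCons x u 4 = u 3 := rfl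
@[simp] lemma cv6_5 (x : α) (u : Fin 5 → α) : Matrix.vecCons x u 5 = u 4 := rfl
@[simp] lemma cv5_0 (x : α) (u : Fin 4 → α) : Matrix.vecCons x u 0 = x := rfl
@[simp] lemma cv5_1 (x : α) (u : Fin 4 → α) : Matrix.vecCons x u 1 = u 0 := rfl
@[simp] lemma cv5_2 (x : α) (u : Fin 4 → α) : Matrix.vecCons x u 2 = u 1 := rfl
@[simp] lemma cv5_3 (x : α) (u : Fin 4 → α) : Matrix.vecCons x u 3 = u 2 := rfl
@[simp] lemma cv5_4 (x : α) (u : Fin 4 → α) : Matrix.vecCons x u 4 = u 3 := rfl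
@[simp] lemma cv4_0 (x : α) (u : Fin 3 → α) : Matrix.vecCons x u 0 = x := rfl
@[simp] lemma cv4_1 (x : α) (u : Fin 3 → α) : Matrix.vecCons x u 1 = u 0 := rfl
@[simp] lemma cv4_2 (x : α) (u : Fin 3 → α) : Matrix.vecCons x u 2 = u 1 := rfl
@[simp] lemma cv4_3 (x : α) (u : Fin 3 → α) : Matrix.vecCons x u 3 = u 2 := rfl
@[simp] lemma cv3_0 (x : α) (u : Fin 2 → α) : Matrix.vecCons x u 0 = x := rfl
@[simp] lemma cv3_1 (x : α) (u : Fin 2 → α) : Matrix.vecCons x u 1 = u 0 := rfl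
@[simp] lemma cv3_2 (x : α) (u : Fin 2 → α) : Matrix.vecCons x u 2 = u 1 := rfl
@[simp] lemma cv2_0 (x : α) (u : Fin 1 → α) : Matrix.vecCons x u 0 = x := rfl
@[simp] lemma cv2_1 (x : α) (u : Fin 1 → α) : Matrix.vecCons x u 1 = u 0 := rfl
@[simp] lemma cv1_0 (x : α) (u : Fin 0 → α) : Matrix.vecCons x u 0 = x := rfl

end aux

set_option maxHeartbeats 2000000 in
/-- The modular invariant matrix `M` of the exceptional B2 level 2 partition function
commutes with the modular generators `S` and `T`. -/
theorem modular_invariant_B2_level2 : M * S = S * M ∧ M * T = T * M := by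
  constructor <;>
    · ext i j
      fin_cases i <;> fin_cases j <;>
        simp [S, T, M, Matrix.mul_apply, Fin.sum_univ_six, Matrix.diagonal,
          Matrix.smul_apply, Matrix.vecHead, Matrix.vecTail] <;> ring
end

section
/- For κ = 5, with ⟨x⟩ = sin(πx/5)/sin(π/5) for real x, the following identities hold: ⟨1⟩·⟨3⟩ / (⟨1/2⟩·⟨3/2⟩) = √5 and ⟨5/2⟩·⟨3⟩ / (⟨1⟩·⟨3/2⟩) = 2. -/
/-- The q-number at altitude `κ`: `⟨x⟩ = sin(πx/κ)/sin(π/κ)`. -/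
noncomputable def qnum (κ x : ℝ) : ℝ := Real.sin (Real.pi * x / κ) / Real.sin (Real.pi / κ)

/-! The symmetries `⟨κ - x⟩ = ⟨x⟩` and `⟨κ/2 - x⟩ = cos(πx/κ)/sin(π/κ)` turn every q-number in
the statement into `1`, `2 cos(π/5)`, or a cosine over `sin(π/5)`. The first ratio becomes
`2 sin²(π/5) / cos(2π/5)`, which is `√5` by `cos(π/5) = (1 + √5)/4`; in the second one
everything cancels. -/

open Real

section

variable {κ : ℝ}

theorem qnum_one (h : sin (π / κ) ≠ 0) : qnum κ 1 = 1 := by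
  rw [qnum, mul_one, div_self h]

theorem qnum_two (h : sin (π / κ) ≠ 0) : qnum κ 2 = 2 * cos (π / κ) := by
  rw [qnum, mul_comm, mul_div_assoc, sin_two_mul]
  field_simp

theorem qnum_self_sub (hκ : κ ≠ 0) (x : ℝ) : qnum κ (κ - x) = qnum κ x := by
  have : π * (κ - x) / κ = π - π * x / κ := by field_simp
  rw [qnum, qnum, this, sin_pi_sub]

theorem qnum_half_sub (hκ : κ ≠ 0) (x : ℝ) :
    qnum κ (κ / 2 - x) = cos (π * x / κ) / sin (π / κ) := by
  have : π * (κ / 2 - x) / κ = π / 2 - π * x / κ := by field_simp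
  rw [qnum, this, sin_pi_div_two_sub]

end

theorem cos_two_pi_div_five : cos (2 * π / 5) = (√5 - 1) / 4 := by
  have h5 : √5 ^ 2 = 5 := sq_sqrt (by norm_num)
  rw [mul_div_assoc, cos_two_mul, cos_pi_div_five]
  linear_combination h5 / 8

theorem sin_sq_pi_div_five : sin (π / 5) ^ 2 = (5 - √5) / 8 := by
  have h5 : √5 ^ 2 = 5 := sq_sqrt (by norm_num)
  rw [sin_sq, cos_pi_div_five]
  linear_combination -h5 / 16

/-- Quantum dimensions of the two fundamental representations of B2 at level 2
(altitude κ = 5): the spinorial `{0,1}` has quantum dimension √5 and the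
vectorial `{1,0}` has quantum dimension 2. -/
theorem b2_level2_fundamental_qdims :
    qnum 5 1 * qnum 5 3 / (qnum 5 (1/2) * qnum 5 (3/2)) = Real.sqrt 5 ∧
    qnum 5 (5/2) * qnum 5 3 / (qnum 5 1 * qnum 5 (3/2)) = 2 := by
  have hs : sin (π / 5) ≠ 0 := (sin_pos_of_pos_of_lt_pi (by positivity) (by linarith [pi_pos])).ne'
  have hc : cos (π / 5) ≠ 0 := by rw [cos_pi_div_five]; positivity
  have h5 : (5 : ℝ) ≠ 0 := by norm_num
  have h1 : qnum 5 1 = 1 := qnum_one hs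
  have h3 : qnum 5 3 = 2 * cos (π / 5) := by
    rw [show (3 : ℝ) = 5 - 2 by norm_num, qnum_self_sub h5, qnum_two hs]
  have h12 : qnum 5 (1 / 2) = cos (2 * π / 5) / sin (π / 5) := by
    rw [show (1 / 2 : ℝ) = 5 / 2 - 2 by norm_num, qnum_half_sub h5, mul_comm]
  have h32 : qnum 5 (3 / 2) = cos (π / 5) / sin (π / 5) := by
    rw [show (3 / 2 : ℝ) = 5 / 2 - 1 by norm_num, qnum_half_sub h5, mul_one]
  have h52 : qnum 5 (5 / 2) = 1 / sin (π / 5) := by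
    rw [show (5 / 2 : ℝ) = 5 / 2 - 0 by norm_num, qnum_half_sub h5, mul_zero,
      zero_div, cos_zero]
  refine ⟨?_, by rw [h52, h3, h1, h32]; field_simp⟩
  have hC : cos (2 * π / 5) ≠ 0 := by
    have : (1 : ℝ) < √5 := by rw [lt_sqrt] <;> norm_num
    rw [cos_two_pi_div_five]
    linarith
  rw [h1, h3, h12, h32]
  field_simp
  rw [sin_sq_pi_div_five, cos_two_pi_div_five]
  linear_combination -sq_sqrt (show (0 : ℝ) ≤ 5 by norm_num) / 4
end

section
/- For κ = 8, with ⟨x⟩ = sin(πx/8)/sin(π/8) for real x, the following identities hold: ⟨2/3⟩·⟨7/3⟩·⟨4⟩ / (⟨1/3⟩·⟨4/3⟩·⟨2⟩) = 2 + √6 and ⟨7/3⟩·⟨8/3⟩·⟨5⟩ / (⟨1⟩·⟨4/3⟩·⟨5/3⟩) = 3 + √6. -/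
open Real

lemma qnum_mul_qnum_mul_qnum_div {κ : ℝ} (hκ : sin (π / κ) ≠ 0) (a b c d e f : ℝ) :
    qnum κ a * qnum κ b * qnum κ c / (qnum κ d * qnum κ e * qnum κ f) =
      sin (π * a / κ) * sin (π * b / κ) * sin (π * c / κ) /
        (sin (π * d / κ) * sin (π * e / κ) * sin (π * f / κ)) := by
  simp only [qnum, div_mul_div_comm]
  exact div_div_div_cancel_right₀ (mul_ne_zero (mul_ne_zero hκ hκ) hκ) _ _

lemma sqrt_six_eq_sqrt_two_mul_sqrt_three : √6 = √2 * √3 := by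
  rw [← sqrt_mul zero_le_two]; norm_num

lemma cos_pi_div_twelve : cos (π / 12) = (√2 * √3 + √2) / 4 := by
  rw [show π / 12 = π / 3 - π / 4 by ring, cos_sub, cos_pi_div_three, cos_pi_div_four,
    sin_pi_div_three, sin_pi_div_four]
  ring

theorem sin_ratio_eq_two_add_sqrt_six :
    sin (π / 12) * sin (7 * π / 24) * sin (π / 2) / (sin (π / 24) * sin (π / 6) * sin (π / 4))
      = 2 + √6 := by
  have hs : 0 < sin (π / 24) := sin_pos_of_pos_of_lt_pi (by positivity) (by linarith [pi_pos])
  have hcos : 2 * cos (5 * π / 24) * cos (π / 24) = cos (π / 4) + cos (π / 6) := by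
    rw [cos_add_cos]; ring_nf
  rw [show π / 12 = 2 * (π / 24) by ring, show 7 * π / 24 = π / 2 - 5 * π / 24 by ring, sin_two_mul,
    sin_pi_div_two_sub, sin_pi_div_two, sin_pi_div_six, sin_pi_div_four, div_eq_iff (by positivity),
    sqrt_six_eq_sqrt_two_mul_sqrt_three]
  rw [cos_pi_div_four, cos_pi_div_six] at hcos
  linear_combination sin (π / 24) * hcos - sin (π / 24) * √3 / 4 * sq_sqrt zero_le_two

theorem sin_ratio_eq_three_add_sqrt_six :
    sin (7 * π / 24) * sin (π / 3) * sin (5 * π / 8) / (sin (π / 8) * sin (π / 6) * sin (5 * π / 24))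
      = 3 + √6 := by
  have hs₃ : 0 < sin (π / 8) := sin_pos_of_pos_of_lt_pi (by positivity) (by linarith [pi_pos])
  have hs₅ : 0 < sin (5 * π / 24) := sin_pos_of_pos_of_lt_pi (by positivity) (by linarith [pi_pos])
  have hcos : 2 * cos (5 * π / 24) * cos (π / 8) = cos (π / 3) + cos (π / 12) := by
    rw [cos_add_cos]; ring_nf
  have hsin : 2 * sin (π / 8) * sin (5 * π / 24) = cos (π / 12) - cos (π / 3) := by
    rw [cos_sub_cos, show (π / 12 - π / 3) / 2 = -(π / 8) by ring, sin_neg]; ring_nf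
  rw [show 7 * π / 24 = π / 2 - 5 * π / 24 by ring, show 5 * π / 8 = π / 8 + π / 2 by ring,
    sin_pi_div_two_sub, sin_add_pi_div_two, sin_pi_div_three, sin_pi_div_six,
    div_eq_iff (by positivity), sqrt_six_eq_sqrt_two_mul_sqrt_three]
  rw [cos_pi_div_three, cos_pi_div_twelve] at hcos hsin
  linear_combination √3 / 4 * hcos - (3 + √2 * √3) / 4 * hsin
    - (√3 + √3 ^ 2) / 16 * sq_sqrt zero_le_two + (√2 / 16 - 1 / 8) * sq_sqrt zero_le_three

/-- Quantum dimensions of the two fundamental representations of G2 at level 4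
(altitude κ = 8): the basic `{0,1}` has quantum dimension 2 + √6 and the
adjoint `{1,0}` has quantum dimension 3 + √6. -/
theorem g2_level4_fundamental_qdims :
    qnum 8 (2/3) * qnum 8 (7/3) * qnum 8 4 / (qnum 8 (1/3) * qnum 8 (4/3) * qnum 8 2)
      = 2 + Real.sqrt 6 ∧
    qnum 8 (7/3) * qnum 8 (8/3) * qnum 8 5 / (qnum 8 1 * qnum 8 (4/3) * qnum 8 (5/3))
      = 3 + Real.sqrt 6 := by
  have h8 : sin (π / 8) ≠ 0 := (sin_pos_of_pos_of_lt_pi (by positivity) (by linarith [pi_pos])).ne'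
  rw [qnum_mul_qnum_mul_qnum_div h8, qnum_mul_qnum_mul_qnum_div h8]
  have basic := sin_ratio_eq_two_add_sqrt_six
  have adjoint := sin_ratio_eq_three_add_sqrt_six
  ring_nf at basic adjoint ⊢
  exact ⟨basic, adjoint⟩
end

section
/- Let F be the 4×4 integer matrix with rows (0,1,0,0), (1,3,1,1), (0,1,0,0), (0,1,0,0). Then F³ = 3F² + 3F, and consequently (1/7)·(-4F⁵ + 17F⁴ + 2F³ - 30F² - 8F) = F. -/
open Matrix

/-- The fundamental annular matrix `F_{0,1}` of the exceptional quantum subgroup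
`E₃(G₂)` (action of the basic representation of G2 at level 3), with integer entries,
viewed over ℚ. -/
def F : Matrix (Fin 4) (Fin 4) ℚ :=
  !![0, 1, 0, 0;
     1, 3, 1, 1;
     0, 1, 0, 0;
     0, 1, 0, 0]

lemma hF2 : F ^ 2 = !![1, 3, 1, 1;
     3, 12, 3, 3;
     1, 3, 1, 1;
     1, 3, 1, 1] := by
  rw [sq]
  ext i j
  fin_cases i <;> fin_cases j <;>
    simp [F, Matrix.mul_apply, Fin.sum_univ_four, Matrix.vecHead, Matrix.vecTail] <;> norm_num

lemma hF3 : F ^ 3 = !![3, 12, 3, 3;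
     12, 45, 12, 12;
     3, 12, 3, 3;
     3, 12, 3, 3] := by
  rw [show F ^ 3 = F ^ 2 * F from pow_succ F 2, hF2]
  ext i j
  fin_cases i <;> fin_cases j <;>
    simp [F, Matrix.mul_apply, Fin.sum_univ_four, Matrix.vecHead, Matrix.vecTail] <;> norm_num

lemma hF4 : F ^ 4 = !![12, 45, 12, 12;
     45, 171, 45, 45;
     12, 45, 12, 12;
     12, 45, 12, 12] := by
  rw [show F ^ 4 = F ^ 3 * F from pow_succ F 3, hF3]
  ext i j
  fin_cases i <;> fin_cases j <;>
    simp [F, Matrix.mul_apply, Fin.sum_univ_four, Matrix.vecHead, Matrix.vecTail] <;> norm_num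

lemma hF5 : F ^ 5 = !![45, 171, 45, 45;
     171, 648, 171, 171;
     45, 171, 45, 45;
     45, 171, 45, 45] := by
  rw [show F ^ 5 = F ^ 4 * F from pow_succ F 4, hF4]
  ext i j
  fin_cases i <;> fin_cases j <;>
    simp [F, Matrix.mul_apply, Fin.sum_univ_four, Matrix.vecHead, Matrix.vecTail] <;> norm_num

/-- `F³ = 3F² + 3F`, and consequently the fusion polynomial
`f₄(x) = (1/7)(-4x⁵ + 17x⁴ + 2x³ - 30x² - 8x)` satisfies `f₄(F) = F`. -/
theorem annular_matrix_identity_E3_G2 :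
    F ^ 3 = 3 • F ^ 2 + 3 • F ∧
    (1 / 7 : ℚ) • (-(4:ℚ) • F ^ 5 + (17:ℚ) • F ^ 4 + (2:ℚ) • F ^ 3
      - (30:ℚ) • F ^ 2 - (8:ℚ) • F) = F := by
  rw [hF2, hF3, hF4, hF5]
  refine ⟨?_, ?_⟩ <;>
  · ext i j
    simp only [Matrix.smul_apply, Matrix.add_apply, Matrix.sub_apply, Matrix.neg_apply,
      smul_eq_mul]
    fin_cases i <;> fin_cases j <;>
      norm_num [F, Matrix.vecHead, Matrix.vecTail]
end
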